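/- arXiv:1106.6153 — 2 statements merged into one kernel-verified Lean document; each statement's English description precedes it below -/
import Mathlib

section
/- Let (U, X^3) be a fuzzy cylinder of radius R and parameter ξ in a complex *-algebra, with X^1 = (U+U*)/2, X^2 = (U−U*)/(2i). Then: (i) the Euclidean action density satisfies Σ_{i,j=1}^{3}⁅X^i,X^j⁆·⁅X^i,X^j⁆ = −2·ξ²·R²·1; and (ii) for the light-like propagating cylinder configuration X^0 := X^3, the Minkowski action density vanishes identically: Σ_{μ,ν=0}^{3} η_{μμ}·η_{νν}·⁅X^μ,X^ν⁆·⁅X^μ,X^ν⁆ = 0, where η = diag(−1,1,1,1). In particular the moduli R and ξ drop out of the matrix model action on this solution. -/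
/-- the moduli `R` and `ξ` drop out of the matrix model action on
the cylinder solution.  For a fuzzy cylinder `(U, X3)` of radius `R > 0` and
parameter `ξ`, with `X1 = (U+U*)/2`, `X2 = (U-U*)/(2i)`:
(i) the Euclidean action density is `Σ_{i,j=1}^3 ⁅Xⁱ,Xʲ⁆⁅Xⁱ,Xʲ⁆ = -2ξ²R²·1`;
(ii) for the light-like propagating configuration `X⁰ := X³`, the Minkowski
action density `Σ_{μ,ν=0}^3 η_{μμ}η_{νν}⁅Xᵘ,Xᵛ⁆⁅Xᵘ,Xᵛ⁆` vanishes. -/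
theorem stmt18 (A : Type*) [Ring A] [Algebra ℂ A] [StarRing A] [StarModule ℂ A]
    (R ξ : ℝ) (hR : 0 < R) (U X3 : A)
    (hUUs : U * star U = ((R : ℂ) ^ 2) • (1 : A))
    (hUsU : star U * U = ((R : ℂ) ^ 2) • (1 : A))
    (hX3sa : star X3 = X3)
    (hUX3 : ⁅U, X3⁆ = (ξ : ℂ) • U)
    (X1 X2 : A)
    (hX1 : X1 = (2 : ℂ)⁻¹ • (U + star U))
    (hX2 : X2 = ((2 : ℂ) * Complex.I)⁻¹ • (U - star U))
    (Xv : Fin 3 → A) (hXv : Xv = ![X1, X2, X3])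
    (X0 : A) (hX0 : X0 = X3)
    (Xw : Fin 4 → A) (hXw : Xw = ![X0, X1, X2, X3])
    (η : Fin 4 → ℂ) (hη : η = ![-1, 1, 1, 1]) :
    (∑ i, ∑ j, ⁅Xv i, Xv j⁆ * ⁅Xv i, Xv j⁆
        = ((-2 * ξ ^ 2 * R ^ 2 : ℝ) : ℂ) • (1 : A))
    ∧ (∑ μ, ∑ ν, (η μ * η ν) • (⁅Xw μ, Xw ν⁆ * ⁅Xw μ, Xw ν⁆) = 0) := by
  letI := LieRing.ofAssociativeRing (A := A)
  have hI : ((2:ℂ) * Complex.I)⁻¹ = -Complex.I / 2 := by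
    rw [mul_inv, Complex.inv_I]; ring
  have hUb : ⁅U, star U⁆ = 0 := by
    rw [Ring.lie_def, hUUs, hUsU, sub_self]
  have hbU : ⁅star U, U⁆ = 0 := by
    rw [Ring.lie_def, hUUs, hUsU, sub_self]
  have hb3 : ⁅star U, X3⁆ = (-(ξ:ℂ)) • star U := by
    have h := congrArg star hUX3
    rw [Ring.lie_def] at h
    simp only [star_sub, star_mul, hX3sa, star_smul, Complex.star_def,
      Complex.conj_ofReal] at h
    rw [Ring.lie_def]
    have : star U * X3 - X3 * star U = -(X3 * star U - star U * X3) := by noncomm_ring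
    rw [this, h, neg_smul]
  have h13 : ⁅X1, X3⁆ = ((ξ:ℂ)/2) • (U - star U) := by
    rw [hX1, smul_lie, add_lie, hUX3, hb3]; module
  have h31 : ⁅X3, X1⁆ = (-(ξ:ℂ)/2) • (U - star U) := by
    rw [← lie_skew, h13]; module
  have h23 : ⁅X2, X3⁆ = (-Complex.I * (ξ:ℂ)/2) • (U + star U) := by
    rw [hX2, smul_lie, sub_lie, hUX3, hb3, hI]; module
  have h32 : ⁅X3, X2⁆ = (Complex.I * (ξ:ℂ)/2) • (U + star U) := by
    rw [← lie_skew, h23]; module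
  have h12 : ⁅X1, X2⁆ = 0 := by
    simp [hX1, hX2, smul_lie, lie_smul, add_lie, lie_sub, hUb, hbU]
  have h21 : ⁅X2, X1⁆ = 0 := by rw [← lie_skew, h12, neg_zero]
  have hA : (U - star U) * (U - star U)
      = U * U + star U * star U - ((2:ℂ) * (R:ℂ)^2) • 1 := by
    have : (U - star U) * (U - star U)
        = U * U + star U * star U - (U * star U + star U * U) := by noncomm_ring
    rw [this, hUUs, hUsU]; module
  have hB : (U + star U) * (U + star U)
      = U * U + star U * star U + ((2:ℂ) * (R:ℂ)^2) • 1 := by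
    have : (U + star U) * (U + star U)
        = U * U + star U * star U + (U * star U + star U * U) := by noncomm_ring
    rw [this, hUUs, hUsU]; module
  have hcI : (-Complex.I * (ξ:ℂ)/2) * (-Complex.I * (ξ:ℂ)/2) = -(ξ:ℂ)^2/4 := by
    linear_combination ((ξ:ℂ)^2/4) * Complex.I_sq
  have hcI' : (Complex.I * (ξ:ℂ)/2) * (Complex.I * (ξ:ℂ)/2) = -(ξ:ℂ)^2/4 := by
    linear_combination ((ξ:ℂ)^2/4) * Complex.I_sq
  constructor
  · subst hXv
    rw [Fin.sum_univ_three]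
    simp only [Fin.sum_univ_three, Matrix.cons_val_zero, Matrix.cons_val_one,
      Matrix.head_cons, Matrix.cons_val_two, Matrix.tail_cons]
    simp only [h12, h21, h13, h31, h23, h32, lie_self, zero_mul, mul_zero,
      add_zero, zero_add, smul_mul_smul_comm, hcI, hcI', hA, hB]
    push_cast
    module
  · subst hXw hX0 hη
    rw [Fin.sum_univ_four]
    simp only [Fin.sum_univ_four, Matrix.cons_val_zero, Matrix.cons_val_one,
      Matrix.head_cons, Matrix.cons_val_two, Matrix.tail_cons,
      Matrix.cons_val_three]
    simp only [h12, h21, h13, h31, h23, h32, lie_self, zero_mul, mul_zero,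
      smul_zero, add_zero, zero_add, smul_mul_smul_comm, hcI, hcI']
    module
end

section
/- (2-dimensional solutions with arbitrary polynomial cross-section) Let A be a unital associative ℂ-algebra, let X⁺, X⁻ ∈ A satisfy ⁅X⁺,X⁻⁆ = c·1 for some c ∈ ℂ (the light-cone quantum plane relations, c = −2iθ), and let p, q ∈ ℂ[T] be arbitrary polynomials. Define F = p(X⁺), G = q(X⁺) (polynomial evaluation in A), and set X^0 = (X⁺ + X⁻)/2, X^3 = (X⁺ − X⁻)/2, X^1 = (F + G)/2, X^2 = (F − G)/(2i). Then the Minkowski matrix Laplacian □φ = −⁅X^0,⁅X^0,φ⁆⁆ + ⁅X^1,⁅X^1,φ⁆⁆ + ⁅X^2,⁅X^2,φ⁆⁆ + ⁅X^3,⁅X^3,φ⁆⁆ satisfies □X^a = 0 for a = 0,1,2,3. Thus for every polynomial cross-section (X^1 + iX^2 = f(X^+)) one obtains a solution of the IKKT equations of motion describing a deformed propagating wave. -/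
open Polynomial

section aux

attribute [local instance 100] LieRing.ofAssociativeRing
variable {A : Type*} [Ring A] [Algebra ℂ A]

lemma pow_br (c : ℂ) (Xp Xm : A) (hlc : ⁅Xp, Xm⁆ = c • (1 : A)) (n : ℕ) : ⁅Xp ^ n, Xm⁆ = ((n : ℂ) * c) • Xp ^ (n - 1) := by
  induction n with
  | zero => simp [Ring.lie_def]
  | succ n ih =>
    have h1 : Xp * Xm = Xm * Xp + c • 1 := by
      have := hlc; rw [Ring.lie_def] at this; linear_combination (norm := noncomm_ring) this
    have h2 : Xp ^ n * Xm = Xm * Xp ^ n + ((n : ℂ) * c) • Xp ^ (n - 1) := by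
      rw [Ring.lie_def] at ih; linear_combination (norm := noncomm_ring) ih
    rw [Ring.lie_def]
    cases n with
    | zero => simp [h1]
    | succ m =>
      have : Xp ^ (m + 1 + 1) * Xm = Xm * Xp ^ (m + 1 + 1)
          + (((m : ℂ) + 1) * c) • Xp ^ m * Xp + c • Xp ^ (m + 1) := by
        calc Xp ^ (m + 1 + 1) * Xm = Xp ^ (m + 1) * (Xp * Xm) := by
              rw [pow_succ]; noncomm_ring
          _ = Xp ^ (m + 1) * (Xm * Xp) + c • Xp ^ (m + 1) := by
              rw [h1]; rw [mul_add]; simp [mul_smul_comm]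
          _ = (Xp ^ (m+1) * Xm) * Xp + c • Xp ^ (m + 1) := by noncomm_ring
          _ = _ := by
              rw [h2]; simp only [Nat.add_sub_cancel, Nat.cast_add, Nat.cast_one]
              noncomm_ring
      rw [this]
      simp only [Nat.add_sub_cancel, Nat.cast_add, Nat.cast_one, smul_mul_assoc,
        ← pow_succ]
      try module

lemma aeval_br (c : ℂ) (Xp Xm : A) (hlc : ⁅Xp, Xm⁆ = c • (1 : A)) (r : Polynomial ℂ) :
    ⁅(Polynomial.aeval Xp r : A), Xm⁆ = c • Polynomial.aeval Xp (derivative r) := by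
  induction r using Polynomial.induction_on' with
  | add f g hf hg => simp [add_lie, hf, hg, smul_add]
  | monomial n a =>
    rw [Polynomial.aeval_monomial, derivative_monomial, Polynomial.aeval_monomial]
    rw [Algebra.algebraMap_eq_smul_one]
    rw [smul_mul_assoc, one_mul, smul_lie, pow_br c Xp Xm hlc]
    rw [Algebra.algebraMap_eq_smul_one, smul_mul_assoc, one_mul]
    rw [smul_smul, smul_smul]
    try module

end aux

/-- 2-dimensional IKKT solutions with arbitrary polynomial
cross-section.  Let `⁅X⁺,X⁻⁆ = c•1` (light-cone quantum plane), `F = p(X⁺)`,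
`G = q(X⁺)` for arbitrary polynomials `p, q`, and set `X⁰ = (X⁺+X⁻)/2`,
`X³ = (X⁺-X⁻)/2`, `X¹ = (F+G)/2`, `X² = (F-G)/(2i)`.  Then the Minkowski matrix
Laplacian `□φ = -⁅X⁰,⁅X⁰,φ⁆⁆ + ⁅X¹,⁅X¹,φ⁆⁆ + ⁅X²,⁅X²,φ⁆⁆ + ⁅X³,⁅X³,φ⁆⁆`
satisfies `□Xᵃ = 0` for `a = 0,1,2,3`: a deformed propagating wave. -/
theorem stmt19 (A : Type*) [Ring A] [Algebra ℂ A]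
    (c : ℂ) (Xp Xm : A)
    (hlc : ⁅Xp, Xm⁆ = c • (1 : A))
    (p q : Polynomial ℂ) (F G : A)
    (hF : F = Polynomial.aeval Xp p)
    (hG : G = Polynomial.aeval Xp q)
    (X0 X1 X2 X3 : A)
    (hX0 : X0 = (2 : ℂ)⁻¹ • (Xp + Xm))
    (hX3 : X3 = (2 : ℂ)⁻¹ • (Xp - Xm))
    (hX1 : X1 = (2 : ℂ)⁻¹ • (F + G))
    (hX2 : X2 = ((2 : ℂ) * Complex.I)⁻¹ • (F - G))
    (Box : A → A)
    (hBox : ∀ φ, Box φ =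
      -⁅X0, ⁅X0, φ⁆⁆ + ⁅X1, ⁅X1, φ⁆⁆ + ⁅X2, ⁅X2, φ⁆⁆ + ⁅X3, ⁅X3, φ⁆⁆) :
    Box X0 = 0 ∧ Box X1 = 0 ∧ Box X2 = 0 ∧ Box X3 = 0 := by
  letI : LieRing A := LieRing.ofAssociativeRing
  have hone : ∀ x : A, ⁅x, (1 : A)⁆ = 0 := fun x => by simp [Ring.lie_def]
  have br1 : ∀ r : Polynomial ℂ, ⁅(Polynomial.aeval Xp r : A), Xm⁆
      = c • Polynomial.aeval Xp (derivative r) := fun r => aeval_br c Xp Xm hlc r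
  have br2 : ∀ r : Polynomial ℂ, ⁅Xm, (Polynomial.aeval Xp r : A)⁆
      = -(c • Polynomial.aeval Xp (derivative r)) := fun r => by
    rw [← lie_skew, br1]
  have comm : ∀ r s : Polynomial ℂ,
      ⁅(Polynomial.aeval Xp r : A), Polynomial.aeval Xp s⁆ = 0 := fun r s => by
    rw [Ring.lie_def, ((Commute.all r s).map (Polynomial.aeval Xp)).eq, sub_self]
  have brPXp : ∀ r : Polynomial ℂ, ⁅(Polynomial.aeval Xp r : A), Xp⁆ = 0 := fun r => by
    simpa using comm r X
  have brXpP : ∀ r : Polynomial ℂ, ⁅Xp, (Polynomial.aeval Xp r : A)⁆ = 0 := fun r => by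
    rw [← lie_skew, brPXp, neg_zero]
  have brXmXp : ⁅Xm, Xp⁆ = -(c • (1 : A)) := by rw [← lie_skew, hlc]
  subst hF hG hX0 hX1 hX2 hX3
  refine ⟨?_, ?_, ?_, ?_⟩ <;>
  · rw [hBox]
    simp only [lie_add, add_lie, lie_sub, sub_lie, lie_smul, smul_lie, lie_self,
      lie_neg, neg_lie, smul_zero, lie_zero, zero_lie, hlc, brXmXp, br1, br2,
      comm, brPXp, brXpP, hone, smul_neg, neg_neg, neg_zero, add_zero, zero_add,
      sub_zero, zero_sub, smul_smul, sub_self, neg_add_rev]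
    try module
end
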